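/- arXiv:1301.6944 — 3 statements merged into one kernel-verified Lean document; each statement's English description precedes it below -/
import Mathlib

section
/- Under the assumptions on L and k, the operator K_P : H → H, f ↦ 2λf + E_P[L''(X,Y,f_{L,P,λ}(X)) f(X) Φ(X)], is a well-defined continuous linear operator on H. -/
open MeasureTheory InnerProductSpace
open scoped RealInnerProductSpace

/-! The integral term of `K_P` at `f` is the evaluation at `f` of the Bochner integral, in
`H →L[ℝ] H`, of the rank-one operators `w z • ⟪Φ z, ·⟫ Φ z` with `w z = L''(z, ⟪f_P, Φ z⟫)`.
Their norms `|w z| ‖Φ z‖²` are uniformly bounded: `Φ` and `⟪f_P, Φ ·⟫` are continuous on the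
compact space `X`, and `L''` is bounded for bounded `t`. So the operator integral exists. -/

section WeightedRankOne

variable {α E : Type*} [MeasurableSpace α] {μ : Measure α}
  [NormedAddCommGroup E] [InnerProductSpace ℝ E] {w : α → ℝ} {Φ : α → E}

theorem integrable_smul_rankOne [IsFiniteMeasure μ] (hw : AEStronglyMeasurable w μ)
    (hΦ : AEStronglyMeasurable Φ μ) {Cw CΦ : ℝ} (hwC : ∀ᵐ z ∂μ, |w z| ≤ Cw)
    (hΦC : ∀ᵐ z ∂μ, ‖Φ z‖ ≤ CΦ) :
    Integrable (fun z => w z • rankOne ℝ (Φ z) (Φ z)) μ := by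
  have hrankOne : Continuous fun v : E => rankOne ℝ v v :=
    (rankOne ℝ).continuous.clm_apply continuous_id
  refine .of_bound (hw.smul (hrankOne.comp_aestronglyMeasurable hΦ)) (Cw * (CΦ * CΦ)) ?_
  filter_upwards [hwC, hΦC] with z hwz hΦz
  rw [norm_smul, norm_rankOne, Real.norm_eq_abs]
  exact mul_le_mul hwz (mul_self_le_mul_self (norm_nonneg _) hΦz) (by positivity)
    ((abs_nonneg _).trans hwz)

theorem integral_smul_rankOne_apply (h : Integrable (fun z => w z • rankOne ℝ (Φ z) (Φ z)) μ)
    (f : E) :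
    (∫ z, w z • rankOne ℝ (Φ z) (Φ z) ∂μ) f = ∫ z, (w z * ⟪f, Φ z⟫) • Φ z ∂μ := by
  rw [ContinuousLinearMap.integral_apply h]
  simp only [smul_apply, rankOne_apply, real_inner_comm f, mul_smul]

end WeightedRankOne

theorem stmt4_general
    (X Y : Type*) [TopologicalSpace X] [CompactSpace X] [MeasurableSpace X]
    [BorelSpace X] [MeasurableSpace Y]
    (H : Type*) [NormedAddCommGroup H] [InnerProductSpace ℝ H]
    (Φ : X → H) (hΦcont : Continuous Φ)
    (P : Measure (X × Y)) [IsProbabilityMeasure P]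
    (L'' : X → Y → ℝ → ℝ)
    (hL''meas : Measurable fun p : (X × Y) × ℝ => L'' p.1.1 p.1.2 p.2)
    (hL''bdd : ∀ a : ℝ, 0 < a → ∃ C : ℝ, ∀ x y t, |t| ≤ a → |L'' x y t| ≤ C)
    (lam : ℝ)
    (fP : H) :
    ∃ K : H →L[ℝ] H,
      ∀ f : H,
        K f = (2 * lam) • f +
          ∫ z : X × Y, (L'' z.1 z.2 (⟪fP, Φ z.1⟫) * ⟪f, Φ z.1⟫) • Φ z.1 ∂P := by
  have hΦm : StronglyMeasurable Φ :=
    hΦcont.stronglyMeasurable_of_hasCompactSupport (.of_compactSpace Φ)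
  obtain ⟨CΦ, hCΦ⟩ := (HasCompactSupport.of_compactSpace Φ).exists_bound_of_continuous hΦcont
  have hfP : Continuous fun x => ⟪fP, Φ x⟫ := continuous_const.inner hΦcont
  obtain ⟨A, hA⟩ := (HasCompactSupport.of_compactSpace _).exists_bound_of_continuous hfP
  obtain ⟨C, hC⟩ := hL''bdd (max A 1) (lt_max_of_lt_right one_pos)
  have hw : Measurable fun z : X × Y => L'' z.1 z.2 ⟪fP, Φ z.1⟫ :=
    hL''meas.comp (measurable_id.prodMk (hfP.measurable.comp measurable_fst))
  have hint := integrable_smul_rankOne (μ := P) (Φ := fun z => Φ z.1) hw.aestronglyMeasurable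
    (hΦm.comp_measurable measurable_fst).aestronglyMeasurable
    (ae_of_all _ fun z => hC _ _ _ ((hA z.1).trans (le_max_left _ _)))
    (ae_of_all _ fun z => hCΦ z.1)
  refine ⟨(2 * lam) • ContinuousLinearMap.id ℝ H +
    ∫ z, L'' z.1 z.2 ⟪fP, Φ z.1⟫ • rankOne ℝ (Φ z.1) (Φ z.1) ∂P, fun f => ?_⟩
  rw [add_apply, integral_smul_rankOne_apply hint]
  rfl

/-- Under the assumptions on `L` and `k`, the operator
`K_P : f ↦ 2λf + E_P[L''(X,Y,f_{L,P,λ}(X)) f(X) Φ(X)]` is a well-defined continuous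
linear operator on the RKHS `H`.  The RKHS is modeled via a bounded feature map `Φ`
with the reproducing property; the expectation is a Bochner integral in `H`. -/
theorem stmt4
    (X Y : Type*) [TopologicalSpace X] [CompactSpace X] [MeasurableSpace X]
    [BorelSpace X] [MeasurableSpace Y]
    (H : Type*) [NormedAddCommGroup H] [InnerProductSpace ℝ H] [CompleteSpace H]
    (Φ : X → H) (hΦcont : Continuous Φ)
    (Ck : ℝ) (hΦbdd : ∀ x : X, ‖Φ x‖ ≤ Ck)
    (P : Measure (X × Y)) [IsProbabilityMeasure P]
    (L'' : X → Y → ℝ → ℝ)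
    (hL''nonneg : ∀ x y t, 0 ≤ L'' x y t)
    (hL''meas : Measurable fun p : (X × Y) × ℝ => L'' p.1.1 p.1.2 p.2)
    (hL''bdd : ∀ a : ℝ, 0 < a → ∃ C : ℝ, ∀ x y t, |t| ≤ a → |L'' x y t| ≤ C)
    (lam : ℝ) (hlam : 0 < lam)
    (fP : H) :
    ∃ K : H →L[ℝ] H,
      ∀ f : H,
        K f = (2 * lam) • f +
          ∫ z : X × Y, (L'' z.1 z.2 (⟪fP, Φ z.1⟫) * ⟪f, Φ z.1⟫) • Φ z.1 ∂P :=
  stmt4_general X Y H Φ hΦcont P L'' hL''meas hL''bdd lam fP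
end

section
/- Let H be a Hilbert space, λ > 0, and for a probability measure P define G_P : H → H by G_P(f) = 2λf + E_P[L'(X,Y,f(X)) Φ(X)] (a Bochner integral). If f_P minimizes f ↦ E_P[L(X,Y,f(X))] + λ||f||²_H over H and L is convex and continuously differentiable in t with the domination conditions, then G_P(f_P) = 0. -/
/-!
Along every line `t ↦ f_P + t • h` the regularized risk is minimal at `t = 0`, so its derivative
there vanishes. Since `Φ` is bounded, the arguments `⟪f_P + t • h, Φ x⟫` stay in a bounded
interval for `|t| < 1`, where `L'` is dominated by an integrable function; hence the risk may be
differentiated under the integral, and the derivative is `⟪h, G_P(f_P)⟫`. Taking `h = G_P(f_P)`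
gives `‖G_P(f_P)‖² = 0`.
-/

open MeasureTheory
open scoped RealInnerProductSpace

section

variable {H : Type*} [NormedAddCommGroup H] [InnerProductSpace ℝ H]

theorem eq_zero_of_isLocalMin_of_hasDerivAt_line {J : H → ℝ} {f G : H} (hmin : IsLocalMin J f)
    (hderiv : ∀ h, HasDerivAt (fun t : ℝ => J (f + t • h)) ⟪h, G⟫ 0) : G = 0 := by
  have hline : IsLocalMin (fun t : ℝ => J (f + t • G)) 0 :=
    IsLocalMin.comp_continuous (g := fun t : ℝ => f + t • G) (by simpa using hmin) (by fun_prop)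
  simpa using hline.hasDerivAt_eq_zero (hderiv G)

theorem norm_add_smul_le_of_abs_le_one (f h : H) {t : ℝ} (ht : |t| ≤ 1) :
    ‖f + t • h‖ ≤ ‖f‖ + ‖h‖ :=
  calc ‖f + t • h‖ ≤ ‖f‖ + |t| * ‖h‖ := by simpa [norm_smul] using norm_add_le f (t • h)
    _ ≤ ‖f‖ + ‖h‖ := by gcongr; exact mul_le_of_le_one_left (norm_nonneg h) ht

theorem hasDerivAt_sq_norm_add_smul (f h : H) :
    HasDerivAt (fun t : ℝ => ‖f + t • h‖ ^ 2) (2 * ⟪f, h⟫) 0 := by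
  have hline : HasDerivAt (fun t : ℝ => f + t • h) h 0 := by
    simpa using ((hasDerivAt_id (0 : ℝ)).smul_const h).const_add f
  simpa using hline.norm_sq

variable [CompleteSpace H] {Z : Type*} [MeasurableSpace Z] {μ : Measure Z}

theorem hasDerivAt_integral_comp_inner_add_smul {φ : Z → H} {C : ℝ} (hφ : ∀ z, ‖φ z‖ ≤ C)
    {ℓ ℓ' : Z → ℝ → ℝ} (hℓ : ∀ z t, HasDerivAt (ℓ z) (ℓ' z t) t)
    (hdom : ∀ a : ℝ, 0 < a → ∃ b : Z → ℝ, Integrable b μ ∧ ∀ z t, |t| ≤ a → |ℓ' z t| ≤ b z)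
    (hℓint : ∀ g : H, Integrable (fun z => ℓ z ⟪g, φ z⟫) μ) (f h : H)
    (hint : Integrable (fun z => ℓ' z ⟪f, φ z⟫ • φ z) μ) :
    HasDerivAt (fun t : ℝ => ∫ z, ℓ z ⟪f + t • h, φ z⟫ ∂μ)
      ⟪h, ∫ z, ℓ' z ⟪f, φ z⟫ • φ z ∂μ⟫ 0 := by
  obtain ⟨b, hb_int, hb⟩ := hdom (|(‖f‖ + ‖h‖) * C| + 1) (by positivity)
  have hF' : ∀ z, ℓ' z ⟪f + (0 : ℝ) • h, φ z⟫ * ⟪h, φ z⟫ = ⟪h, ℓ' z ⟪f, φ z⟫ • φ z⟫ := by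
    intro z; simp [real_inner_smul_right]
  have hderiv := hasDerivAt_integral_of_dominated_loc_of_deriv_le (μ := μ)
    (F' := fun t z => ℓ' z ⟪f + t • h, φ z⟫ * ⟪h, φ z⟫) (bound := fun z => b z * (‖h‖ * C))
    (Metric.ball_mem_nhds (0 : ℝ) one_pos)
    (Filter.Eventually.of_forall fun t => (hℓint (f + t • h)).aestronglyMeasurable)
    (hℓint (f + (0 : ℝ) • h))
    (by simpa only [hF'] using (hint.const_inner h).aestronglyMeasurable)
    (Filter.Eventually.of_forall fun z t ht => ?bound) (hb_int.mul_const _)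
    (Filter.Eventually.of_forall fun z t _ => ?deriv)
  · simpa only [hF', integral_inner hint] using hderiv.2
  case bound =>
    rw [Metric.mem_ball, Real.dist_eq, sub_zero] at ht
    have harg : |⟪f + t • h, φ z⟫| ≤ |(‖f‖ + ‖h‖) * C| + 1 :=
      calc |⟪f + t • h, φ z⟫| ≤ ‖f + t • h‖ * ‖φ z‖ := abs_real_inner_le_norm _ _
        _ ≤ (‖f‖ + ‖h‖) * C := by
          gcongr
          · exact norm_add_smul_le_of_abs_le_one f h ht.le
          · exact hφ z
        _ ≤ |(‖f‖ + ‖h‖) * C| + 1 := by linarith [le_abs_self ((‖f‖ + ‖h‖) * C)]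
    have hdir : |⟪h, φ z⟫| ≤ ‖h‖ * C :=
      (abs_real_inner_le_norm _ _).trans (by gcongr; exact hφ z)
    rw [Real.norm_eq_abs, abs_mul]
    exact mul_le_mul (hb z _ harg) hdir (abs_nonneg _) ((abs_nonneg _).trans (hb z _ harg))
  case deriv =>
    have hline : HasDerivAt (fun s : ℝ => ⟪f + s • h, φ z⟫) ⟪h, φ z⟫ t := by
      simp only [inner_add_left, real_inner_smul_left]
      simpa using ((hasDerivAt_id t).mul_const ⟪h, φ z⟫).const_add ⟪f, φ z⟫
    exact (hℓ z _).comp t hline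

end

theorem stmt12_general
    (X Y : Type*) [MeasurableSpace X] [MeasurableSpace Y]
    (H : Type*) [NormedAddCommGroup H] [InnerProductSpace ℝ H] [CompleteSpace H]
    (Φ : X → H) (Ck : ℝ) (hΦbdd : ∀ x : X, ‖Φ x‖ ≤ Ck)
    (P : Measure (X × Y))
    (L : X → Y → ℝ → ℝ) (L' : X → Y → ℝ → ℝ)
    (hderiv : ∀ x y t, HasDerivAt (L x y) (L' x y t) t)
    (hdom : ∀ a : ℝ, 0 < a → ∃ b'a : X × Y → ℝ, Integrable b'a P ∧
      ∀ x y t, |t| ≤ a → |L' x y t| ≤ b'a (x, y))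
    (lam : ℝ)
    (hLint : ∀ f : H, Integrable (fun z : X × Y => L z.1 z.2 (⟪f, Φ z.1⟫)) P)
    (fP : H)
    (hmin : ∀ f : H,
      (∫ z, L z.1 z.2 (⟪fP, Φ z.1⟫) ∂P) + lam * ‖fP‖ ^ 2 ≤
        (∫ z, L z.1 z.2 (⟪f, Φ z.1⟫) ∂P) + lam * ‖f‖ ^ 2)
    (hint : Integrable (fun z : X × Y => L' z.1 z.2 (⟪fP, Φ z.1⟫) • Φ z.1) P) :
    (2 * lam) • fP + ∫ z, L' z.1 z.2 (⟪fP, Φ z.1⟫) • Φ z.1 ∂P = 0 := by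
  refine eq_zero_of_isLocalMin_of_hasDerivAt_line
    (J := fun f => (∫ z, L z.1 z.2 (⟪f, Φ z.1⟫) ∂P) + lam * ‖f‖ ^ 2)
    (Filter.Eventually.of_forall hmin) fun h => ?_
  have hrisk := hasDerivAt_integral_comp_inner_add_smul (fun z => hΦbdd z.1)
    (fun z => hderiv z.1 z.2)
    (fun a ha => (hdom a ha).imp fun b hb => ⟨hb.1, fun z => hb.2 z.1 z.2⟩) hLint fP h hint
  refine (hrisk.add ((hasDerivAt_sq_norm_add_smul fP h).const_mul lam)).congr_deriv ?_
  rw [inner_add_right, real_inner_smul_right, real_inner_comm fP h]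
  ring

/-- First-order optimality condition for the SVM: if `f_P` minimizes
`f ↦ E_P[L(X,Y,f(X))] + λ‖f‖²` over the RKHS `H`, where `L` is convex and continuously
differentiable in `t` with derivative `L'` dominated on bounded intervals, then
`G_P(f_P) = 2λ f_P + E_P[L'(X,Y,f_P(X)) Φ(X)] = 0` (a Bochner integral in `H`). -/
theorem stmt12
    (X Y : Type*) [MeasurableSpace X] [MeasurableSpace Y]
    (H : Type*) [NormedAddCommGroup H] [InnerProductSpace ℝ H] [CompleteSpace H]
    (Φ : X → H) (Ck : ℝ) (hΦbdd : ∀ x : X, ‖Φ x‖ ≤ Ck)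
    (P : Measure (X × Y)) [IsProbabilityMeasure P]
    (L : X → Y → ℝ → ℝ) (L' : X → Y → ℝ → ℝ)
    (hLconv : ∀ x y, ConvexOn ℝ Set.univ (L x y))
    (hderiv : ∀ x y t, HasDerivAt (L x y) (L' x y t) t)
    (hL'cont : ∀ x y, Continuous (L' x y))
    (hdom : ∀ a : ℝ, 0 < a → ∃ b'a : X × Y → ℝ, Integrable b'a P ∧
      ∀ x y t, |t| ≤ a → |L' x y t| ≤ b'a (x, y))
    (lam : ℝ) (hlam : 0 < lam)
    (hLint : ∀ f : H, Integrable (fun z : X × Y => L z.1 z.2 (⟪f, Φ z.1⟫)) P)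
    (fP : H)
    (hmin : ∀ f : H,
      (∫ z, L z.1 z.2 (⟪fP, Φ z.1⟫) ∂P) + lam * ‖fP‖ ^ 2 ≤
        (∫ z, L z.1 z.2 (⟪f, Φ z.1⟫) ∂P) + lam * ‖f‖ ^ 2)
    (hint : Integrable (fun z : X × Y => L' z.1 z.2 (⟪fP, Φ z.1⟫) • Φ z.1) P) :
    (2 * lam) • fP + ∫ z, L' z.1 z.2 (⟪fP, Φ z.1⟫) • Φ z.1 ∂P = 0 :=
  stmt12_general X Y H Φ Ck hΦbdd P L L' hderiv hdom lam hLint fP hmin hint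
end

section
/- Under the stated assumptions, the map Q ↦ f_{L,Q,λ} sending a probability measure to its SVM is Lipschitz-like in the following sense: ||f_{L,P,λ} − f_{L,Q,λ}||_H ≤ λ⁻¹ ||E_P[L'(X,Y,f_{L,Q,λ}(X)) Φ(X)] − E_Q[L'(X,Y,f_{L,Q,λ}(X)) Φ(X)]||_H. -/
/-!
A minimizer `f` of `R_μ(f) + λ‖f‖²`, where `R_μ(f) = E_μ[L(X, Y, f(X))]`, satisfies the
first-order condition `∇R_μ(f) = -2λ f` with `∇R_μ(f) = E_μ[L'(X, Y, f(X)) Φ(X)]`: the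
directional derivative of `R_μ` is obtained by dominated convergence, since convexity squeezes
the difference quotients of the loss between `L'(f)⟪h, Φ⟫` and `L(f + h) - L(f)`. Subtracting the
conditions for `P` and `Q` gives
`2λ (f_P - f_Q) = (∇R_Q(f_Q) - ∇R_P(f_Q)) - (∇R_P(f_P) - ∇R_P(f_Q))`,
and the last term pairs nonnegatively with `f_P - f_Q` because `L'` is monotone. Pairing with
`f_P - f_Q` and Cauchy–Schwarz yield `‖f_P - f_Q‖ ≤ (2λ)⁻¹ ‖∇R_P(f_Q) - ∇R_Q(f_Q)‖`.
-/

open MeasureTheory Filter Topology Set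
open scoped RealInnerProductSpace

lemma ConvexOn.comp_add_mul {g : ℝ → ℝ} (hg : ConvexOn ℝ univ g) (u a : ℝ) :
    ConvexOn ℝ univ (fun s => g (u + s * a)) := by
  refine ⟨convex_univ, fun x _ y _ p q hp hq hpq => ?_⟩
  have hcomb : u + (p • x + q • y) * a = p • (u + x * a) + q • (u + y * a) := by
    simp only [smul_eq_mul]; linear_combination (-u) * hpq
  simpa only [hcomb] using hg.2 (mem_univ _) (mem_univ _) hp hq hpq

lemma ConvexOn.abs_slope_le {g : ℝ → ℝ} {d t : ℝ} (hg : ConvexOn ℝ univ g)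
    (hd : HasDerivAt g d 0) (ht : t ∈ Ioc 0 1) : |slope g 0 t| ≤ |d| + |g 1 - g 0| := by
  have hlow : d ≤ slope g 0 t := hg.le_slope_of_hasDerivAt (mem_univ _) (mem_univ _) ht.1 hd
  have hup : slope g 0 t ≤ slope g 0 1 :=
    hg.slope_mono (mem_univ 0) ⟨mem_univ _, ht.1.ne'⟩ ⟨mem_univ _, one_ne_zero⟩ ht.2
  rw [slope_def_field g 0 1, sub_zero, div_one] at hup
  rw [abs_le]
  constructor <;>
    linarith [neg_abs_le d, le_abs_self (g 1 - g 0), abs_nonneg d, abs_nonneg (g 1 - g 0)]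

lemma ConvexOn.sub_mul_sub_nonneg {g g' : ℝ → ℝ} (hg : ConvexOn ℝ univ g)
    (hg' : ∀ t, HasDerivAt g (g' t) t) (u v : ℝ) : 0 ≤ (g' u - g' v) * (u - v) := by
  have hmono : Monotone g' := by
    have hderiv : deriv g = g' := funext fun t => (hg' t).deriv
    simpa only [hderiv, monotoneOn_univ] using
      hg.monotoneOn_deriv fun t _ => (hg' t).differentiableAt
  rcases le_total v u with h | h
  · exact mul_nonneg (sub_nonneg.2 (hmono h)) (sub_nonneg.2 h)
  · exact mul_nonneg_of_nonpos_of_nonpos (sub_nonpos.2 (hmono h)) (sub_nonpos.2 h)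

section RegularizedRisk

variable {α H : Type*} [MeasurableSpace α] [NormedAddCommGroup H] [InnerProductSpace ℝ H]

noncomputable def risk (μ : Measure α) (ℓ : α → ℝ → ℝ) (ψ : α → H) (f : H) : ℝ :=
  ∫ z, ℓ z ⟪f, ψ z⟫ ∂μ

noncomputable def regularizedRisk (μ : Measure α) (ℓ : α → ℝ → ℝ) (ψ : α → H) (lam : ℝ) (f : H) :
    ℝ :=
  risk μ ℓ ψ f + lam * ‖f‖ ^ 2

noncomputable def riskGrad (μ : Measure α) (ℓ' : α → ℝ → ℝ) (ψ : α → H) (f : H) : H :=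
  ∫ z, ℓ' z ⟪f, ψ z⟫ • ψ z ∂μ

variable {μ : Measure α} {ℓ ℓ' : α → ℝ → ℝ} {ψ : α → H}

lemma integrable_mul_inner_of_integrable_smul {f : H}
    (hf : Integrable (fun z => ℓ' z ⟪f, ψ z⟫ • ψ z) μ) (h : H) :
    Integrable (fun z => ℓ' z ⟪f, ψ z⟫ * ⟪h, ψ z⟫) μ := by
  simpa only [innerSL_apply_apply, real_inner_smul_right] using
    (innerSL ℝ h).integrable_comp hf

lemma inner_riskGrad [CompleteSpace H] {f : H}
    (hf : Integrable (fun z => ℓ' z ⟪f, ψ z⟫ • ψ z) μ) (h : H) :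
    ⟪h, riskGrad μ ℓ' ψ f⟫ = ∫ z, ℓ' z ⟪f, ψ z⟫ * ⟪h, ψ z⟫ ∂μ := by
  simp only [riskGrad, ← integral_inner hf, real_inner_smul_right]

lemma inner_riskGrad_sub_riskGrad_nonneg [CompleteSpace H]
    (hℓ : ∀ z, ConvexOn ℝ univ (ℓ z)) (hℓ' : ∀ z t, HasDerivAt (ℓ z) (ℓ' z t) t) {f g : H}
    (hf : Integrable (fun z => ℓ' z ⟪f, ψ z⟫ • ψ z) μ)
    (hg : Integrable (fun z => ℓ' z ⟪g, ψ z⟫ • ψ z) μ) :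
    0 ≤ ⟪f - g, riskGrad μ ℓ' ψ f - riskGrad μ ℓ' ψ g⟫ := by
  rw [inner_sub_right, inner_riskGrad hf, inner_riskGrad hg,
    ← integral_sub (integrable_mul_inner_of_integrable_smul hf _)
      (integrable_mul_inner_of_integrable_smul hg _)]
  refine integral_nonneg fun z => ?_
  rw [Pi.zero_apply, inner_sub_left, ← sub_mul]
  exact (hℓ z).sub_mul_sub_nonneg (hℓ' z) _ _

theorem tendsto_slope_risk_nhdsGT [CompleteSpace H]
    (hℓ : ∀ z, ConvexOn ℝ univ (ℓ z)) (hℓ' : ∀ z t, HasDerivAt (ℓ z) (ℓ' z t) t)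
    (hint : ∀ f, Integrable (fun z => ℓ z ⟪f, ψ z⟫) μ) {f : H}
    (hf : Integrable (fun z => ℓ' z ⟪f, ψ z⟫ • ψ z) μ) (h : H) :
    Tendsto (slope (fun t : ℝ => risk μ ℓ ψ (f + t • h)) 0) (𝓝[>] 0)
      (𝓝 ⟪h, riskGrad μ ℓ' ψ f⟫) := by
  set line : α → ℝ → ℝ := fun z s => ℓ z (⟪f, ψ z⟫ + s * ⟪h, ψ z⟫)
  have hline_eq : ∀ z s, ℓ z ⟪f + s • h, ψ z⟫ = line z s := fun z s => by
    simp only [line, inner_add_left, real_inner_smul_left]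
  have hline_int : ∀ s, Integrable (fun z => line z s) μ := fun s => by
    simpa only [hline_eq] using hint (f + s • h)
  have hslope : slope (fun t : ℝ => risk μ ℓ ψ (f + t • h)) 0 =
      fun t => ∫ z, slope (line z) 0 t ∂μ := by
    funext t
    simp only [slope_def_field, risk, hline_eq]
    rw [← integral_sub (hline_int t) (hline_int 0), integral_div]
  have hderiv : ∀ z, HasDerivAt (line z) (ℓ' z ⟪f, ψ z⟫ * ⟪h, ψ z⟫) 0 := fun z => by
    have hlin : HasDerivAt (fun s : ℝ => ⟪f, ψ z⟫ + s * ⟪h, ψ z⟫) ⟪h, ψ z⟫ 0 := by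
      simpa using ((hasDerivAt_id (0 : ℝ)).mul_const ⟪h, ψ z⟫).const_add ⟪f, ψ z⟫
    exact (hℓ' z ⟪f, ψ z⟫).comp_of_eq 0 hlin (by simp)
  rw [hslope, inner_riskGrad hf]
  refine tendsto_integral_filter_of_dominated_convergence
    (fun z => |ℓ' z ⟪f, ψ z⟫ * ⟪h, ψ z⟫| + |line z 1 - line z 0|) ?_ ?_ ?_ ?_
  · refine Eventually.of_forall fun t => ?_
    simp only [slope_def_field]
    exact (((hline_int t).sub (hline_int 0)).div_const _).aestronglyMeasurable
  · filter_upwards [Ioc_mem_nhdsGT zero_lt_one] with t ht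
    exact Eventually.of_forall fun z => ((hℓ z).comp_add_mul _ _).abs_slope_le (hderiv z) ht
  · exact (integrable_mul_inner_of_integrable_smul hf h).abs.add
      ((hline_int 1).sub (hline_int 0)).abs
  · exact Eventually.of_forall fun z => (hderiv z).tendsto_slope.mono_left (nhdsGT_le_nhdsNE 0)

theorem riskGrad_eq_neg_smul_of_isMin [CompleteSpace H]
    (hℓ : ∀ z, ConvexOn ℝ univ (ℓ z)) (hℓ' : ∀ z t, HasDerivAt (ℓ z) (ℓ' z t) t)
    (hint : ∀ f, Integrable (fun z => ℓ z ⟪f, ψ z⟫) μ) {lam : ℝ} {f : H}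
    (hf : Integrable (fun z => ℓ' z ⟪f, ψ z⟫ • ψ z) μ)
    (hmin : ∀ g, regularizedRisk μ ℓ ψ lam f ≤ regularizedRisk μ ℓ ψ lam g) :
    riskGrad μ ℓ' ψ f = -(2 * lam) • f := by
  have hvar : ∀ h, 0 ≤ ⟪h, riskGrad μ ℓ' ψ f + (2 * lam) • f⟫ := by
    intro h
    have hnorm : HasDerivAt (fun t : ℝ => ‖f + t • h‖ ^ 2) (2 * ⟪f, h⟫) 0 := by
      simpa using (((hasDerivAt_id (0 : ℝ)).smul_const h).const_add f).norm_sq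
    have hlim := (tendsto_slope_risk_nhdsGT hℓ hℓ' hint hf h).add
      ((hnorm.tendsto_slope.mono_left (nhdsGT_le_nhdsNE 0)).const_mul lam)
    have hslope_nonneg : ∀ᶠ t in 𝓝[>] (0 : ℝ),
        0 ≤ slope (fun t => risk μ ℓ ψ (f + t • h)) 0 t +
          lam * slope (fun t : ℝ => ‖f + t • h‖ ^ 2) 0 t := by
      filter_upwards [self_mem_nhdsWithin] with t (ht : 0 < t)
      have := hmin (f + t • h)
      simp only [regularizedRisk, slope_def_field, zero_smul, add_zero, sub_zero] at this ⊢
      rw [mul_div_assoc', ← add_div, le_div_iff₀ ht]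
      linarith
    rw [inner_add_right, real_inner_smul_right, real_inner_comm f h]
    linarith [ge_of_tendsto hlim hslope_nonneg]
  have hzero := hvar (-(riskGrad μ ℓ' ψ f + (2 * lam) • f))
  rw [inner_neg_left, neg_nonneg, real_inner_self_nonpos] at hzero
  rw [neg_smul]
  exact eq_neg_of_add_eq_zero_left hzero

theorem norm_sub_le_of_isMin_regularizedRisk [CompleteSpace H] {P Q : Measure α}
    (hℓ : ∀ z, ConvexOn ℝ univ (ℓ z)) (hℓ' : ∀ z t, HasDerivAt (ℓ z) (ℓ' z t) t)
    (hintP : ∀ f, Integrable (fun z => ℓ z ⟪f, ψ z⟫) P)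
    (hintQ : ∀ f, Integrable (fun z => ℓ z ⟪f, ψ z⟫) Q) {lam : ℝ} (hlam : 0 < lam) {fP fQ : H}
    (hPfP : Integrable (fun z => ℓ' z ⟪fP, ψ z⟫ • ψ z) P)
    (hPfQ : Integrable (fun z => ℓ' z ⟪fQ, ψ z⟫ • ψ z) P)
    (hQfQ : Integrable (fun z => ℓ' z ⟪fQ, ψ z⟫ • ψ z) Q)
    (hminP : ∀ g, regularizedRisk P ℓ ψ lam fP ≤ regularizedRisk P ℓ ψ lam g)
    (hminQ : ∀ g, regularizedRisk Q ℓ ψ lam fQ ≤ regularizedRisk Q ℓ ψ lam g) :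
    ‖fP - fQ‖ ≤ (2 * lam)⁻¹ * ‖riskGrad P ℓ' ψ fQ - riskGrad Q ℓ' ψ fQ‖ := by
  have hP := riskGrad_eq_neg_smul_of_isMin hℓ hℓ' hintP hPfP hminP
  have hQ := riskGrad_eq_neg_smul_of_isMin hℓ hℓ' hintQ hQfQ hminQ
  have hmono := inner_riskGrad_sub_riskGrad_nonneg hℓ hℓ' hPfP hPfQ
  have hsplit : (2 * lam) • (fP - fQ) = (riskGrad Q ℓ' ψ fQ - riskGrad P ℓ' ψ fQ) -
      (riskGrad P ℓ' ψ fP - riskGrad P ℓ' ψ fQ) := by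
    rw [hP, hQ]; module
  have key : 2 * lam * ‖fP - fQ‖ ^ 2 ≤
      ‖fP - fQ‖ * ‖riskGrad P ℓ' ψ fQ - riskGrad Q ℓ' ψ fQ‖ :=
    calc 2 * lam * ‖fP - fQ‖ ^ 2 = ⟪fP - fQ, (2 * lam) • (fP - fQ)⟫ := by
          rw [real_inner_smul_right, real_inner_self_eq_norm_sq]
      _ ≤ ⟪fP - fQ, riskGrad Q ℓ' ψ fQ - riskGrad P ℓ' ψ fQ⟫ := by
          rw [hsplit, inner_sub_right]; linarith
      _ ≤ ‖fP - fQ‖ * ‖riskGrad Q ℓ' ψ fQ - riskGrad P ℓ' ψ fQ‖ := real_inner_le_norm _ _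
      _ = ‖fP - fQ‖ * ‖riskGrad P ℓ' ψ fQ - riskGrad Q ℓ' ψ fQ‖ := by
          rw [norm_sub_rev (riskGrad Q ℓ' ψ fQ)]
  rw [inv_mul_eq_div, le_div_iff₀' (by positivity)]
  nlinarith [norm_nonneg (fP - fQ), norm_nonneg (riskGrad P ℓ' ψ fQ - riskGrad Q ℓ' ψ fQ)]

end RegularizedRisk

theorem stmt17_general
    (X Y : Type*) [MeasurableSpace X] [MeasurableSpace Y]
    (H : Type*) [NormedAddCommGroup H] [InnerProductSpace ℝ H] [CompleteSpace H]
    (Φ : X → H)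
    (P Q : Measure (X × Y))
    (L : X → Y → ℝ → ℝ) (L' : X → Y → ℝ → ℝ)
    (hLconv : ∀ x y, ConvexOn ℝ Set.univ (L x y))
    (hderiv : ∀ x y t, HasDerivAt (L x y) (L' x y t) t)
    (lam : ℝ) (hlam : 0 < lam)
    (hLintP : ∀ f : H, Integrable (fun z : X × Y => L z.1 z.2 (⟪f, Φ z.1⟫)) P)
    (hLintQ : ∀ f : H, Integrable (fun z : X × Y => L z.1 z.2 (⟪f, Φ z.1⟫)) Q)
    (fP fQ : H)
    (hminP : ∀ f : H,
      (∫ z, L z.1 z.2 (⟪fP, Φ z.1⟫) ∂P) + lam * ‖fP‖ ^ 2 ≤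
        (∫ z, L z.1 z.2 (⟪f, Φ z.1⟫) ∂P) + lam * ‖f‖ ^ 2)
    (hminQ : ∀ f : H,
      (∫ z, L z.1 z.2 (⟪fQ, Φ z.1⟫) ∂Q) + lam * ‖fQ‖ ^ 2 ≤
        (∫ z, L z.1 z.2 (⟪f, Φ z.1⟫) ∂Q) + lam * ‖f‖ ^ 2)
    (hintPfP : Integrable (fun z : X × Y => L' z.1 z.2 (⟪fP, Φ z.1⟫) • Φ z.1) P)
    (hintPfQ : Integrable (fun z : X × Y => L' z.1 z.2 (⟪fQ, Φ z.1⟫) • Φ z.1) P)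
    (hintQfQ : Integrable (fun z : X × Y => L' z.1 z.2 (⟪fQ, Φ z.1⟫) • Φ z.1) Q) :
    ‖fP - fQ‖ ≤ lam⁻¹ *
      ‖(∫ z, L' z.1 z.2 (⟪fQ, Φ z.1⟫) • Φ z.1 ∂P) -
        ∫ z, L' z.1 z.2 (⟪fQ, Φ z.1⟫) • Φ z.1 ∂Q‖ := by
  calc ‖fP - fQ‖
      ≤ (2 * lam)⁻¹ * ‖(∫ z, L' z.1 z.2 (⟪fQ, Φ z.1⟫) • Φ z.1 ∂P) -
          ∫ z, L' z.1 z.2 (⟪fQ, Φ z.1⟫) • Φ z.1 ∂Q‖ :=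
        norm_sub_le_of_isMin_regularizedRisk (ℓ := fun z : X × Y => L z.1 z.2)
          (ψ := fun z : X × Y => Φ z.1)
          (fun z => hLconv z.1 z.2) (fun z => hderiv z.1 z.2) hLintP hLintQ hlam
          hintPfP hintPfQ hintQfQ hminP hminQ
    _ ≤ _ := by gcongr; linarith

/-- Lipschitz-like stability of SVMs with respect to the underlying
distribution: with `f_{L,P,λ}` and `f_{L,Q,λ}` the unique minimizers of the regularized
risks under `P` and `Q`,
`‖f_{L,P,λ} − f_{L,Q,λ}‖_H ≤ λ⁻¹ ‖E_P[L'(X,Y,f_{L,Q,λ}(X))Φ(X)] − E_Q[L'(X,Y,f_{L,Q,λ}(X))Φ(X)]‖_H`. -/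
theorem stmt17
    (X Y : Type*) [MeasurableSpace X] [MeasurableSpace Y]
    (H : Type*) [NormedAddCommGroup H] [InnerProductSpace ℝ H] [CompleteSpace H]
    (Φ : X → H) (Ck : ℝ) (hΦbdd : ∀ x : X, ‖Φ x‖ ≤ Ck)
    (P Q : Measure (X × Y)) [IsProbabilityMeasure P] [IsProbabilityMeasure Q]
    (L : X → Y → ℝ → ℝ) (L' : X → Y → ℝ → ℝ)
    (hLconv : ∀ x y, ConvexOn ℝ Set.univ (L x y))
    (hderiv : ∀ x y t, HasDerivAt (L x y) (L' x y t) t)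
    (hL'cont : ∀ x y, Continuous (L' x y))
    (lam : ℝ) (hlam : 0 < lam)
    (hLintP : ∀ f : H, Integrable (fun z : X × Y => L z.1 z.2 (⟪f, Φ z.1⟫)) P)
    (hLintQ : ∀ f : H, Integrable (fun z : X × Y => L z.1 z.2 (⟪f, Φ z.1⟫)) Q)
    (fP fQ : H)
    (hminP : ∀ f : H,
      (∫ z, L z.1 z.2 (⟪fP, Φ z.1⟫) ∂P) + lam * ‖fP‖ ^ 2 ≤
        (∫ z, L z.1 z.2 (⟪f, Φ z.1⟫) ∂P) + lam * ‖f‖ ^ 2)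
    (hminQ : ∀ f : H,
      (∫ z, L z.1 z.2 (⟪fQ, Φ z.1⟫) ∂Q) + lam * ‖fQ‖ ^ 2 ≤
        (∫ z, L z.1 z.2 (⟪f, Φ z.1⟫) ∂Q) + lam * ‖f‖ ^ 2)
    (hintPfP : Integrable (fun z : X × Y => L' z.1 z.2 (⟪fP, Φ z.1⟫) • Φ z.1) P)
    (hintPfQ : Integrable (fun z : X × Y => L' z.1 z.2 (⟪fQ, Φ z.1⟫) • Φ z.1) P)
    (hintQfQ : Integrable (fun z : X × Y => L' z.1 z.2 (⟪fQ, Φ z.1⟫) • Φ z.1) Q) :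
    ‖fP - fQ‖ ≤ lam⁻¹ *
      ‖(∫ z, L' z.1 z.2 (⟪fQ, Φ z.1⟫) • Φ z.1 ∂P) -
        ∫ z, L' z.1 z.2 (⟪fQ, Φ z.1⟫) • Φ z.1 ∂Q‖ :=
  stmt17_general X Y H Φ P Q L L' hLconv hderiv lam hlam hLintP hLintQ fP fQ hminP hminQ hintPfP
    hintPfQ hintQfQ
end
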